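/- For n ≥ 1, the number of binary strings of length n containing exactly m maximal runs of ones of odd length (and arbitrarily many maximal runs of ones of even length) equals the sum over t from 0 to floor((n-2m+1)/2) of binomial(n-m-2t+1, m)·binomial(n-m-t, t). -/

import Mathlib

/-- The maximal runs of a binary string, as a list of (bit, length) pairs,
from left to right. -/
def runs : List Bool → List (Bool × ℕ)
  | [] => []
  | b :: l =>
    match runs l with
    | [] => [(b, 1)]
    | (c, k) :: rest => if b = c then (c, k + 1) :: rest else (b, 1) :: (c, k) :: rest

/-- The lengths of the maximal runs of ones (nonnull runs of ones) of a binary string. -/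
def oneRuns (l : List Bool) : List ℕ :=
  (runs l).filterMap fun p => if p.1 then some p.2 else none


open Finset

lemma runs_cons_eq (b : Bool) (l : List Bool) :
    runs (b :: l) = match runs l with
      | [] => [(b, 1)]
      | (c, k) :: rest => if b = c then (c, k + 1) :: rest else (b, 1) :: (c, k) :: rest := rfl

lemma runs_cons (b : Bool) (l : List Bool) : ∃ k rest, runs (b :: l) = (b, k) :: rest := by
  rcases hr : runs l with _ | ⟨⟨c, k⟩, rest⟩
  · exact ⟨1, [], by simp [runs, hr]⟩
  · by_cases hbc : b = c
    · exact ⟨k + 1, rest, by subst hbc; simp [runs, hr]⟩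
    · exact ⟨1, (c, k) :: rest, by simp [runs, hr, hbc]⟩

lemma oneRuns_false (l : List Bool) : oneRuns (false :: l) = oneRuns l := by
  rcases hr : runs l with _ | ⟨⟨c, k⟩, rest⟩
  · simp [oneRuns, runs, hr]
  · cases c <;> simp [oneRuns, runs, hr]

lemma L1 (l : List Bool) :
    ((oneRuns (false :: l)).filter fun x => Odd x).length
      = ((oneRuns l).filter fun x => Odd x).length := by
  rw [oneRuns_false]

lemma L2 (l : List Bool) :
    ((oneRuns (true :: true :: l)).filter fun x => Odd x).length
      = ((oneRuns l).filter fun x => Odd x).length := by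
  rcases hr : runs l with _ | ⟨⟨c, k⟩, rest⟩
  · simp [oneRuns, runs, hr]
  · cases c
    · simp [oneRuns, runs, hr]
    · have hpar : Odd (k + 1 + 1) ↔ Odd k := by simp [Nat.odd_iff]; omega
      simp [oneRuns, runs, hr, List.filter_cons, hpar]
      by_cases h : Odd k <;> simp [h]

lemma L3 (l : List Bool) :
    ((oneRuns (true :: false :: l)).filter fun x => Odd x).length
      = ((oneRuns l).filter fun x => Odd x).length + 1 := by
  obtain ⟨j, r, hr⟩ := runs_cons false l
  have h1 : runs (true :: false :: l) = (true, 1) :: (false, j) :: r := by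
    rw [runs_cons_eq true (false :: l), hr]
    simp
  have h2 : oneRuns (true :: false :: l) = 1 :: oneRuns (false :: l) := by
    simp [oneRuns, h1, hr]
  rw [h2, oneRuns_false]
  simp [List.filter_cons]

lemma card_cons (n : ℕ) (P : List Bool → Prop) [DecidablePred P] :
    (Finset.univ.filter fun s : Fin (n+1) → Bool => P (List.ofFn s)).card
      = (Finset.univ.filter fun t : Fin n → Bool => P (false :: List.ofFn t)).card
      + (Finset.univ.filter fun t : Fin n → Bool => P (true :: List.ofFn t)).card := by
  have h1 : ∀ b : Bool,
      (Finset.univ.filter fun s : Fin (n+1) → Bool => P (List.ofFn s) ∧ s 0 = b).card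
        = (Finset.univ.filter fun t : Fin n → Bool => P (b :: List.ofFn t)).card := by
    intro b
    apply Finset.card_bij' (fun s _ => Fin.tail s) (fun t _ => Fin.cons b t)
    case hi =>
      intro s hs
      simp only [mem_filter, mem_univ, true_and] at hs ⊢
      obtain ⟨hP, hb⟩ := hs
      rw [List.ofFn_succ, hb] at hP
      exact hP
    case hj =>
      intro t ht
      simp only [mem_filter, mem_univ, true_and] at ht ⊢
      refine ⟨?_, by simp⟩
      rw [List.ofFn_succ]
      simpa using ht
    case left_inv =>
      intro s hs
      simp only [mem_filter, mem_univ, true_and] at hs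
      rw [← hs.2]
      exact Fin.cons_self_tail s
    case right_inv =>
      intro t ht
      simp [Fin.tail_cons]
  have h2 := Finset.card_filter_add_card_filter_not
      (s := (Finset.univ.filter fun s : Fin (n+1) → Bool => P (List.ofFn s)))
      (p := fun s => s 0 = false)
  rw [Finset.filter_filter, Finset.filter_filter] at h2
  have e2 : (Finset.univ.filter fun s : Fin (n+1) → Bool =>
      P (List.ofFn s) ∧ ¬ s 0 = false) = (Finset.univ.filter fun s : Fin (n+1) → Bool =>
      P (List.ofFn s) ∧ s 0 = true) := by
    apply Finset.filter_congr
    intro s _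
    constructor
    · rintro ⟨hP, hb⟩; exact ⟨hP, by simpa using hb⟩
    · rintro ⟨hP, hb⟩; exact ⟨hP, by simp [hb]⟩
  rw [h1 false, e2, h1 true] at h2
  omega

def cnt (n m : ℕ) : ℕ :=
  (Finset.univ.filter fun s : Fin n → Bool =>
    ((oneRuns (List.ofFn s)).filter fun x => Odd x).length = m).card

lemma cnt_split (n m : ℕ) :
    cnt (n+2) m = cnt (n+1) m
      + (Finset.univ.filter fun t : Fin n → Bool =>
          ((oneRuns (List.ofFn t)).filter fun x => Odd x).length + 1 = m).card
      + cnt n m := by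
  unfold cnt
  rw [card_cons (n+1) (fun l => ((oneRuns l).filter fun x => Odd x).length = m)]
  rw [card_cons n (fun l => ((oneRuns (true :: l)).filter fun x => Odd x).length = m)]
  simp only [L1, L2, L3]
  ring

lemma cnt_rec0 (n : ℕ) : cnt (n+2) 0 = cnt (n+1) 0 + cnt n 0 := by
  have := cnt_split n 0
  simpa using this

lemma cnt_rec1 (n m : ℕ) :
    cnt (n+2) (m+1) = cnt (n+1) (m+1) + cnt n m + cnt n (m+1) := by
  have := cnt_split n (m+1)
  simpa [cnt, Nat.succ_inj] using this

def T (a m : ℕ) : ℕ := ∑ t ∈ Finset.range (a+1), (a - 2*t + 1).choose m * (a - t).choose t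

lemma T_ext (a m N : ℕ) (h : a + 1 ≤ N) :
    T a m = ∑ t ∈ Finset.range N, (a - 2*t + 1).choose m * (a - t).choose t := by
  unfold T
  apply Finset.sum_subset (Finset.range_subset_range.2 h)
  intro t ht hnt
  simp only [Finset.mem_range] at ht hnt
  rw [Nat.choose_eq_zero_of_lt (show a - t < t by omega), mul_zero]

lemma pt0_succ (c u : ℕ) : (c + 2 - (u+1)).choose (u+1)
    = (c + 1 - (u+1)).choose (u+1) + (c - u).choose u := by
  rcases le_or_gt u c with hle | hlt
  · obtain ⟨d, rfl⟩ := Nat.exists_eq_add_of_le hle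
    rw [show u + d + 2 - (u+1) = d + 1 by omega, show u + d + 1 - (u+1) = d by omega,
        show u + d - u = d by omega]
    rw [Nat.choose_succ_succ' d u]
    omega
  · rw [Nat.choose_eq_zero_of_lt (show c + 2 - (u+1) < u+1 by omega),
        Nat.choose_eq_zero_of_lt (show c + 1 - (u+1) < u+1 by omega),
        Nat.choose_eq_zero_of_lt (show c - u < u by omega)]

lemma key0 (c : ℕ) : T (c+2) 0 = T (c+1) 0 + T c 0 := by
  have h1 : T (c+2) 0 = ∑ t ∈ Finset.range (c+3), (c + 2 - t).choose t := by
    unfold T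
    exact Finset.sum_congr rfl fun t _ => by simp
  have h2 : T (c+1) 0 = ∑ t ∈ Finset.range (c+3), (c + 1 - t).choose t := by
    rw [T_ext (c+1) 0 (c+3) (by omega)]
    exact Finset.sum_congr rfl fun t _ => by simp
  have h3 : T c 0 = ∑ t ∈ Finset.range (c+2), (c - t).choose t := by
    rw [T_ext c 0 (c+2) (by omega)]
    exact Finset.sum_congr rfl fun t _ => by simp
  have e1 : ∑ t ∈ Finset.range (c+3), (c + 2 - t).choose t
      = ∑ x ∈ Finset.range (c+2), (c + 2 - (x+1)).choose (x+1) + (c + 2 - 0).choose 0 :=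
    Finset.sum_range_succ' (fun t => (c + 2 - t).choose t) (c+2)
  have e2 : ∑ t ∈ Finset.range (c+3), (c + 1 - t).choose t
      = ∑ x ∈ Finset.range (c+2), (c + 1 - (x+1)).choose (x+1) + (c + 1 - 0).choose 0 :=
    Finset.sum_range_succ' (fun t => (c + 1 - t).choose t) (c+2)
  have e3 : ∑ x ∈ Finset.range (c+2), (c + 2 - (x+1)).choose (x+1)
      = ∑ x ∈ Finset.range (c+2), (c + 1 - (x+1)).choose (x+1)
        + ∑ x ∈ Finset.range (c+2), (c - x).choose x := by
    rw [← Finset.sum_add_distrib]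
    exact Finset.sum_congr rfl fun x _ => pt0_succ c x
  rw [h1, h2, h3, e1, e2]
  simp only [Nat.choose_zero_right]
  omega

lemma ptm_zero (b m : ℕ) :
    (b + 2 - 2*0 + 1).choose (m+1) * (b + 2 - 0).choose 0
      + (b + 1 - 2*0).choose (m+1) * (b - 0).choose 0
    = (b + 1 - 2*0 + 1).choose (m+1) * (b + 1 - 0).choose 0
      + (b - 2*0 + 1).choose (m+1) * (b - 0).choose 0
      + (b + 1 - 2*0 + 1).choose m * (b + 1 - 0).choose 0 := by
  simp only [Nat.mul_zero, Nat.sub_zero, Nat.choose_zero_right, mul_one]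
  rw [show b + 1 + 1 = b + 2 from rfl, show b + 2 + 1 = (b + 2) + 1 from rfl,
      Nat.choose_succ_succ' (b+2) m]
  omega

lemma ptm_succ (b m s : ℕ) :
    (b + 2 - 2*(s+1) + 1).choose (m+1) * (b + 2 - (s+1)).choose (s+1)
      + (b + 1 - 2*(s+1)).choose (m+1) * (b - (s+1)).choose (s+1)
    = (b + 1 - 2*(s+1) + 1).choose (m+1) * (b + 1 - (s+1)).choose (s+1)
      + (b - 2*(s+1) + 1).choose (m+1) * (b - (s+1)).choose (s+1)
      + (b + 1 - 2*(s+1) + 1).choose m * (b + 1 - (s+1)).choose (s+1)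
      + (b + 1 - 2*s).choose (m+1) * (b - s).choose s := by
  rcases le_or_gt (2*s + 2) b with h1 | h1
  · -- region 1 : b = 2s+2+d
    obtain ⟨d, rfl⟩ := Nat.exists_eq_add_of_le h1
    rw [show 2*s + 2 + d + 2 - 2*(s+1) + 1 = d + 3 by omega,
        show 2*s + 2 + d + 1 - 2*(s+1) + 1 = d + 2 by omega,
        show 2*s + 2 + d - 2*(s+1) + 1 = d + 1 by omega,
        show 2*s + 2 + d + 1 - 2*(s+1) = d + 1 by omega,
        show 2*s + 2 + d + 2 - (s+1) = s + d + 3 by omega,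
        show 2*s + 2 + d + 1 - (s+1) = s + d + 2 by omega,
        show 2*s + 2 + d - (s+1) = s + d + 1 by omega,
        show 2*s + 2 + d + 1 - 2*s = d + 3 by omega,
        show 2*s + 2 + d - s = s + d + 2 by omega]
    rw [show d + 3 = (d + 2) + 1 from rfl, Nat.choose_succ_succ' (d+2) m,
        show s + d + 3 = (s + d + 2) + 1 from rfl, Nat.choose_succ_succ' (s+d+2) s]
    ring
  · rcases le_or_gt (2*s + 2) (b + 1) with h2 | h2
    · -- region 2 : b = 2s+1
      have hb : b = 2*s + 1 := by omega
      subst hb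
      rw [show 2*s + 1 + 2 - 2*(s+1) + 1 = 2 by omega,
          show 2*s + 1 + 1 - 2*(s+1) + 1 = 1 by omega,
          show 2*s + 1 - 2*(s+1) + 1 = 1 by omega,
          show 2*s + 1 + 1 - 2*(s+1) = 0 by omega,
          show 2*s + 1 + 2 - (s+1) = s + 2 by omega,
          show 2*s + 1 + 1 - (s+1) = s + 1 by omega,
          show 2*s + 1 - (s+1) = s by omega,
          show 2*s + 1 + 1 - 2*s = 2 by omega,
          show 2*s + 1 - s = s + 1 by omega]
      rw [Nat.choose_succ_self_right (s+1), Nat.choose_self (s+1),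
          Nat.choose_succ_self s, Nat.choose_succ_self_right s,
          Nat.choose_zero_succ m]
      rw [show (2 : ℕ) = 1 + 1 from rfl, Nat.choose_succ_succ' 1 m]
      ring
    · rcases le_or_gt (2*s + 2) (b + 2) with h3 | h3
      · -- region 3 : b = 2s
        have hb : b = 2*s := by omega
        subst hb
        rw [show 2*s + 2 - 2*(s+1) + 1 = 1 by omega,
            show 2*s + 1 - 2*(s+1) + 1 = 1 by omega,
            show 2*s - 2*(s+1) + 1 = 1 by omega,
            show 2*s + 1 - 2*(s+1) = 0 by omega,
            show 2*s + 2 - (s+1) = s + 1 by omega,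
            show 2*s + 1 - (s+1) = s by omega,
            show 2*s + 1 - 2*s = 1 by omega,
            show 2*s - s = s by omega]
        rw [Nat.choose_self (s+1), Nat.choose_succ_self s, Nat.choose_self s,
            Nat.choose_zero_succ m,
            Nat.choose_eq_zero_of_lt (show 2*s - (s+1) < s + 1 by omega)]
        ring
      · -- region 4 : 2s+2 ≥ b+3
        rw [Nat.choose_eq_zero_of_lt (show b + 2 - (s+1) < s + 1 by omega),
            Nat.choose_eq_zero_of_lt (show b - (s+1) < s + 1 by omega),
            Nat.choose_eq_zero_of_lt (show b + 1 - (s+1) < s + 1 by omega),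
            Nat.choose_eq_zero_of_lt (show b - s < s by omega)]
        ring

lemma key (b m : ℕ) : T (b+2) (m+1) = T (b+1) (m+1) + T b (m+1) + T (b+1) m := by
  have hL : T (b+2) (m+1)
      = ∑ x ∈ Finset.range (b+3), (b + 2 - 2*(x+1) + 1).choose (m+1) * (b + 2 - (x+1)).choose (x+1)
        + (b + 2 - 2*0 + 1).choose (m+1) * (b + 2 - 0).choose 0 := by
    rw [T_ext (b+2) (m+1) (b+4) (by omega)]
    exact Finset.sum_range_succ' (fun t => (b + 2 - 2*t + 1).choose (m+1) * (b + 2 - t).choose t) (b+3)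
  have hA : T (b+1) (m+1)
      = ∑ x ∈ Finset.range (b+3), (b + 1 - 2*(x+1) + 1).choose (m+1) * (b + 1 - (x+1)).choose (x+1)
        + (b + 1 - 2*0 + 1).choose (m+1) * (b + 1 - 0).choose 0 := by
    rw [T_ext (b+1) (m+1) (b+4) (by omega)]
    exact Finset.sum_range_succ' (fun t => (b + 1 - 2*t + 1).choose (m+1) * (b + 1 - t).choose t) (b+3)
  have hB : T b (m+1)
      = ∑ x ∈ Finset.range (b+3), (b - 2*(x+1) + 1).choose (m+1) * (b - (x+1)).choose (x+1)
        + (b - 2*0 + 1).choose (m+1) * (b - 0).choose 0 := by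
    rw [T_ext b (m+1) (b+4) (by omega)]
    exact Finset.sum_range_succ' (fun t => (b - 2*t + 1).choose (m+1) * (b - t).choose t) (b+3)
  have hC : T (b+1) m
      = ∑ x ∈ Finset.range (b+3), (b + 1 - 2*(x+1) + 1).choose m * (b + 1 - (x+1)).choose (x+1)
        + (b + 1 - 2*0 + 1).choose m * (b + 1 - 0).choose 0 := by
    rw [T_ext (b+1) m (b+4) (by omega)]
    exact Finset.sum_range_succ' (fun t => (b + 1 - 2*t + 1).choose m * (b + 1 - t).choose t) (b+3)
  -- summed per-term identity
  have hsum : ∑ x ∈ Finset.range (b+3),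
        (b + 2 - 2*(x+1) + 1).choose (m+1) * (b + 2 - (x+1)).choose (x+1)
      + ∑ x ∈ Finset.range (b+3),
        (b + 1 - 2*(x+1)).choose (m+1) * (b - (x+1)).choose (x+1)
      = ∑ x ∈ Finset.range (b+3),
        (b + 1 - 2*(x+1) + 1).choose (m+1) * (b + 1 - (x+1)).choose (x+1)
      + ∑ x ∈ Finset.range (b+3),
        (b - 2*(x+1) + 1).choose (m+1) * (b - (x+1)).choose (x+1)
      + ∑ x ∈ Finset.range (b+3),
        (b + 1 - 2*(x+1) + 1).choose m * (b + 1 - (x+1)).choose (x+1)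
      + ∑ x ∈ Finset.range (b+3),
        (b + 1 - 2*x).choose (m+1) * (b - x).choose x := by
    rw [← Finset.sum_add_distrib, ← Finset.sum_add_distrib, ← Finset.sum_add_distrib,
        ← Finset.sum_add_distrib]
    exact Finset.sum_congr rfl fun x _ => ptm_succ b m x
  -- telescoping bridge
  have htel : ∑ x ∈ Finset.range (b+3), (b + 1 - 2*x).choose (m+1) * (b - x).choose x
      = ∑ x ∈ Finset.range (b+3), (b + 1 - 2*(x+1)).choose (m+1) * (b - (x+1)).choose (x+1)
        + (b + 1 - 2*0).choose (m+1) * (b - 0).choose 0 := by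
    have e1 : ∑ x ∈ Finset.range (b+4), (b + 1 - 2*x).choose (m+1) * (b - x).choose x
        = ∑ x ∈ Finset.range (b+3), (b + 1 - 2*(x+1)).choose (m+1) * (b - (x+1)).choose (x+1)
          + (b + 1 - 2*0).choose (m+1) * (b - 0).choose 0 := Finset.sum_range_succ'
      (fun t => (b + 1 - 2*t).choose (m+1) * (b - t).choose t) (b+3)
    have e2 : ∑ x ∈ Finset.range (b+4), (b + 1 - 2*x).choose (m+1) * (b - x).choose x
        = ∑ x ∈ Finset.range (b+3), (b + 1 - 2*x).choose (m+1) * (b - x).choose x := by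
      rw [Finset.sum_range_succ,
          Nat.choose_eq_zero_of_lt (show b - (b+3) < b + 3 by omega), mul_zero, add_zero]
    omega
  have hz := ptm_zero b m
  omega

lemma T_zero (j : ℕ) : T 0 j = Nat.choose 1 j := by unfold T; simp

lemma T_one (j : ℕ) : T 1 j = Nat.choose 2 j := by
  unfold T
  rw [Finset.sum_range_succ, Finset.sum_range_succ, Finset.sum_range_zero]
  norm_num

lemma rhs_eq (n m : ℕ) :
    ∑ t ∈ Finset.range ((n - 2 * m + 1) / 2 + 1),
        (n - m - 2 * t + 1).choose m * (n - m - t).choose t = T (n - m) m := by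
  unfold T
  refine (Finset.sum_subset (Finset.range_subset_range.2 (by omega)) ?_)
  intro t ht hnt
  simp only [Finset.mem_range] at ht hnt
  rcases le_or_gt (m + 2*t) n with h | h
  · rw [Nat.choose_eq_zero_of_lt (show n - m - 2*t + 1 < m by omega), Nat.zero_mul]
  · rw [Nat.choose_eq_zero_of_lt (show n - m - t < t by omega), Nat.mul_zero]
lemma hoc_nil : ((oneRuns ([] : List Bool)).filter fun x => Odd x).length = 0 := by decide
lemma hoc_false : ((oneRuns [false]).filter fun x => Odd x).length = 0 := by decide
lemma hoc_true : ((oneRuns [true]).filter fun x => Odd x).length = 1 := by decide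

lemma card_fin0 (P : List Bool → Prop) [DecidablePred P] :
    (Finset.univ.filter fun t : Fin 0 → Bool => P (List.ofFn t)).card
      = if P [] then 1 else 0 := by
  have h : ∀ t : Fin 0 → Bool, List.ofFn t = [] := fun t => by simp
  simp only [h]
  by_cases hP : P [] <;> simp [hP]

lemma cnt1_eq (k : ℕ) : cnt 1 k = (if 0 = k then 1 else 0) + (if 1 = k then 1 else 0) := by
  unfold cnt
  rw [card_cons 0 (fun l => ((oneRuns l).filter fun x => Odd x).length = k),
      card_fin0 (fun l => ((oneRuns (false :: l)).filter fun x => Odd x).length = k),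
      card_fin0 (fun l => ((oneRuns (true :: l)).filter fun x => Odd x).length = k)]
  simp only [hoc_false, hoc_true]

lemma cnt2_eq (k : ℕ) :
    cnt 2 k = (if 0 = k then 1 else 0) + (if 1 = k then 1 else 0)
      + ((if 1 = k then 1 else 0) + (if 0 = k then 1 else 0)) := by
  unfold cnt
  rw [show (2 : ℕ) = 1 + 1 from rfl,
      card_cons 1 (fun l => ((oneRuns l).filter fun x => Odd x).length = k),
      card_cons 0 (fun l => ((oneRuns (false :: l)).filter fun x => Odd x).length = k),
      card_cons 0 (fun l => ((oneRuns (true :: l)).filter fun x => Odd x).length = k),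
      card_fin0 (fun l => ((oneRuns (false :: false :: l)).filter fun x => Odd x).length = k),
      card_fin0 (fun l => ((oneRuns (false :: true :: l)).filter fun x => Odd x).length = k),
      card_fin0 (fun l => ((oneRuns (true :: false :: l)).filter fun x => Odd x).length = k),
      card_fin0 (fun l => ((oneRuns (true :: true :: l)).filter fun x => Odd x).length = k)]
  simp only [L1, L2, L3, hoc_nil, hoc_false, hoc_true]

lemma base1 : ∀ m : ℕ, cnt 1 m = T (1 - m) m := by
  intro m
  rw [cnt1_eq]
  rcases m with _ | _ | m
  · rw [T_one]; decide
  · rw [show (1 : ℕ) - 1 = 0 from rfl, T_zero]; decide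
  · rw [show (1 : ℕ) - (m + 2) = 0 by omega, T_zero,
        Nat.choose_eq_zero_of_lt (show 1 < m + 2 by omega)]
    simp

lemma base2 : ∀ m : ℕ, cnt 2 m = T (2 - m) m := by
  intro m
  rw [cnt2_eq]
  rcases m with _ | _ | m
  · have : T 2 0 = 2 := by unfold T; decide
    rw [this]; decide
  · rw [show (2 : ℕ) - 1 = 1 from rfl, T_one]; decide
  · rw [show (2 : ℕ) - (m + 2) = 0 by omega, T_zero,
        Nat.choose_eq_zero_of_lt (show 1 < m + 2 by omega)]
    simp

lemma main : ∀ n, ∀ m : ℕ, cnt (n+1) m = T (n+1-m) m := by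
  intro n
  induction n using Nat.strong_induction_on with
  | _ n ih =>
    match n with
    | 0 => exact base1
    | 1 => exact base2
    | (k+2) =>
      intro m
      have h1 := ih (k+1) (by omega)
      have h0 := ih k (by omega)
      rcases m with _ | m
      · rw [show k+2+1 = (k+1)+2 from rfl, cnt_rec0 (k+1), h1 0, h0 0]
        simp only [Nat.sub_zero]
        exact ((key0 (k+1)).symm : T (k+2) 0 + T (k+1) 0 = T (k+1+2) 0)
      · rw [show k+2+1 = (k+1)+2 from rfl, cnt_rec1 (k+1) m, h1 (m+1), h0 m, h0 (m+1)]
        rcases le_or_gt m k with hmk | hmk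
        · obtain ⟨b, rfl⟩ := Nat.exists_eq_add_of_le hmk
          rw [show m+b+1+1-(m+1) = b+1 by omega, show m+b+1-m = b+1 by omega,
              show m+b+1-(m+1) = b by omega, show m+b+1+2-(m+1) = b+2 by omega,
              key b m]
          ring
        · rcases eq_or_lt_of_le (Nat.succ_le_of_lt hmk) with hme | hme
          · -- m = k+1
            have hm : m = k + 1 := by omega
            rw [show k+1+1-(m+1) = 0 by omega, show k+1-m = 0 by omega,
                show k+1-(m+1) = 0 by omega, show k+1+2-(m+1) = 1 by omega]
            simp only [T_zero, T_one]
            rcases Nat.lt_or_ge m 2 with h2 | h2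
            · have hm1 : m = 1 := by omega
              subst hm1
              decide
            · rw [Nat.choose_eq_zero_of_lt (show 1 < m+1 by omega),
                  Nat.choose_eq_zero_of_lt (show 1 < m by omega),
                  Nat.choose_eq_zero_of_lt (show 2 < m+1 by omega)]
          · -- m ≥ k+2
            rw [show k+1+1-(m+1) = 0 by omega, show k+1-m = 0 by omega,
                show k+1-(m+1) = 0 by omega, show k+1+2-(m+1) = 0 by omega]
            simp only [T_zero]
            rw [Nat.choose_eq_zero_of_lt (show 1 < m+1 by omega),
                Nat.choose_eq_zero_of_lt (show 1 < m by omega)]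

/-- For `n ≥ 1`, the number of binary strings of length `n` containing exactly `m`
odd-length maximal runs of ones (and arbitrarily many even-length ones) equals
`∑_{t=0}^{⌊(n-2m+1)/2⌋} C(n-m-2t+1, m) * C(n-m-t, t)`. -/
theorem stmt14 (n m : ℕ) (hn : 1 ≤ n) :
    (Finset.univ.filter fun s : Fin n → Bool =>
        ((oneRuns (List.ofFn s)).filter fun x => Odd x).length = m).card
      = ∑ t ∈ Finset.range ((n - 2 * m + 1) / 2 + 1),
          (n - m - 2 * t + 1).choose m * (n - m - t).choose t := by
  obtain ⟨n', rfl⟩ : ∃ n', n = n' + 1 := ⟨n - 1, by omega⟩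
  rw [rhs_eq]
  exact main n' m
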